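/- In any descriptive σ-model based on a weakly transitive frame, every cluster C satisfies |C| ≤ 2^{|σ|}. -/

import Mathlib

/-- Modal formulas built from propositional variables (indexed by ℕ),
constants ⊤, ⊥, negation, conjunction and the modal operator ◇. -/
inductive MF : Type where
  | var : ℕ → MF
  | top : MF
  | bot : MF
  | neg : MF → MF
  | and : MF → MF → MF
  | dia : MF → MF
deriving DecidableEq

namespace MF

/-- Disjunction, as an abbreviation. -/
def or (a b : MF) : MF := neg (and (neg a) (neg b))

/-- Implication, as an abbreviation. -/
def imp (a b : MF) : MF := MF.or (neg a) b

/-- Box, as an abbreviation: □φ := ¬◇¬φ. -/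
def box (a : MF) : MF := neg (dia (neg a))

/-- The (finite) set of propositional variables occurring in a formula. -/
def sig : MF → Finset ℕ
  | var n => {n}
  | top => ∅
  | bot => ∅
  | neg a => a.sig
  | and a b => a.sig ∪ b.sig
  | dia a => a.sig

/-- The set of subformulas of a formula. -/
def subf : MF → Finset MF
  | var n => {var n}
  | top => {top}
  | bot => {bot}
  | neg a => insert (neg a) (subf a)
  | and a b => insert (and a b) (subf a ∪ subf b)
  | dia a => insert (dia a) (subf a)

/-- The number of subformulas of a formula. -/
def nsub (a : MF) : ℕ := (subf a).card

end MF

/-- A Kripke model: a binary (accessibility) relation on worlds together with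
a valuation assigning to each propositional variable a set of worlds. -/
structure KModel (W : Type) where
  R : W → W → Prop
  val : ℕ → W → Prop

/-- Weak transitivity: xRy and yRz imply x = z or xRz. -/
def WTrans {W : Type} (R : W → W → Prop) : Prop :=
  ∀ x y z : W, R x y → R y z → x = z ∨ R x z

/-- The usual Kripke truth relation. -/
def Sat {W : Type} (M : KModel W) : W → MF → Prop
  | x, .var n => M.val n x
  | _, .top => True
  | _, .bot => False
  | x, .neg a => ¬ Sat M x a
  | x, .and a b => Sat M x a ∧ Sat M x b
  | x, .dia a => ∃ y, M.R x y ∧ Sat M y a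

/-- wK4-validity: truth at every point of every model based on a weakly
transitive frame. -/
def WK4Valid (φ : MF) : Prop :=
  ∀ (W : Type) (M : KModel W), WTrans M.R → ∀ x : W, Sat M x φ

/-- The cluster of a point x: C(x) = {x} ∪ {y | xRy and yRx}. -/
def cluster {W : Type} (R : W → W → Prop) (x : W) : Set W :=
  {x} ∪ {y | R x y ∧ R y x}

/-- C R C' for sets of points: xRy for some x ∈ C, y ∈ C'. -/
def clusterRel {W : Type} (R : W → W → Prop) (C C' : Set W) : Prop :=
  ∃ x ∈ C, ∃ y ∈ C', R x y

/-- C R y for a set C and point y: xRy for some x ∈ C. -/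
def clusterRelPt {W : Type} (R : W → W → Prop) (C : Set W) (y : W) : Prop :=
  ∃ x ∈ C, R x y

/-- C R^s C': C R C' and C ≠ C'. -/
def clusterRelS {W : Type} (R : W → W → Prop) (C C' : Set W) : Prop :=
  clusterRel R C C' ∧ C ≠ C'

/-- A set is a cluster if it is the cluster of some point. -/
def IsCluster {W : Type} (R : W → W → Prop) (C : Set W) : Prop :=
  ∃ x : W, C = cluster R x

/-- A σ-model is descriptive if it satisfies (dif), (ref) and (com). -/
def Descriptive {W : Type} (σ : Finset ℕ) (M : KModel W) : Prop :=
  (∀ x y : W, (∀ φ : MF, φ.sig ⊆ σ → (Sat M x φ ↔ Sat M y φ)) → x = y) ∧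
  (∀ x y : W, M.R x y ↔ ∀ χ : MF, χ.sig ⊆ σ → Sat M y χ → Sat M x (MF.dia χ)) ∧
  (∀ Γ : Set MF, (∀ φ ∈ Γ, φ.sig ⊆ σ) →
    (∀ Γ' : Finset MF, ↑Γ' ⊆ Γ → ∃ x : W, ∀ φ ∈ Γ', Sat M x φ) →
    ∃ x : W, ∀ φ ∈ Γ, Sat M x φ)

/-- The ρ-type of a point: the set of all ρ-formulas true at it. -/
def rType {W : Type} (M : KModel W) (ρ : Finset ℕ) (x : W) : Set MF :=
  {φ : MF | φ.sig ⊆ ρ ∧ Sat M x φ}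

/-- A cluster C is ρ-maximal if whenever C R y and some x ∈ C has the same
ρ-type as y, then y ∈ C. -/
def RhoMaximal {W : Type} (M : KModel W) (ρ : Finset ℕ) (C : Set W) : Prop :=
  ∀ x ∈ C, ∀ y : W, clusterRelPt M.R C y → rType M ρ x = rType M ρ y → y ∈ C

/-- β is a ρ-bisimulation between M1 and M2: conditions (atom) and (move). -/
def IsBisim {W1 W2 : Type} (ρ : Finset ℕ) (M1 : KModel W1) (M2 : KModel W2)
    (β : W1 → W2 → Prop) : Prop :=
  ∀ x1 x2, β x1 x2 →
    (∀ n ∈ ρ, M1.val n x1 ↔ M2.val n x2) ∧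
    (∀ y1, M1.R x1 y1 → ∃ y2, M2.R x2 y2 ∧ β y1 y2) ∧
    (∀ y2, M2.R x2 y2 → ∃ y1, M1.R x1 y1 ∧ β y1 y2)

/-- M1,x1 ∼ρ M2,x2 : some ρ-bisimulation relates x1 to x2. -/
def Bisimilar {W1 W2 : Type} (ρ : Finset ℕ) (M1 : KModel W1) (x1 : W1)
    (M2 : KModel W2) (x2 : W2) : Prop :=
  ∃ β : W1 → W2 → Prop, IsBisim ρ M1 M2 β ∧ β x1 x2

/-!
Two points of a cluster that agree on the variables of σ are σ-bisimilar: identify them with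
each other and every other point with itself; weak transitivity makes this a bisimulation,
since a point that one of the two sees is either seen by the other or is the other itself.
Bisimilar points have the same σ-type, so by (dif) they coincide. A point of a cluster is
therefore determined by the set of variables of σ true at it, which leaves at most 2^|σ|
possibilities.
-/

theorem sat_iff_of_isBisim {W1 W2 : Type} {ρ : Finset ℕ} {M1 : KModel W1} {M2 : KModel W2}
    {β : W1 → W2 → Prop} (h : IsBisim ρ M1 M2 β) (φ : MF) (hφ : φ.sig ⊆ ρ)
    {x1 : W1} {x2 : W2} (hx : β x1 x2) : Sat M1 x1 φ ↔ Sat M2 x2 φ := by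
  induction φ generalizing x1 x2 with
  | var n => exact (h x1 x2 hx).1 n (hφ (Finset.mem_singleton_self n))
  | top => exact Iff.rfl
  | bot => exact Iff.rfl
  | neg a ih => exact not_congr (ih hφ hx)
  | and a b iha ihb =>
    rw [MF.sig, Finset.union_subset_iff] at hφ
    exact and_congr (iha hφ.1 hx) (ihb hφ.2 hx)
  | dia a ih =>
    constructor
    · rintro ⟨y1, hxy, hy⟩
      obtain ⟨y2, hxy2, hβ⟩ := (h x1 x2 hx).2.1 y1 hxy
      exact ⟨y2, hxy2, (ih hφ hβ).1 hy⟩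
    · rintro ⟨y2, hxy, hy⟩
      obtain ⟨y1, hxy1, hβ⟩ := (h x1 x2 hx).2.2 y2 hxy
      exact ⟨y1, hxy1, (ih hφ hβ).2 hy⟩

section Cluster

variable {W : Type} {R : W → W → Prop}

theorem rel_of_mem_cluster (hw : WTrans R) {x a b : W} (ha : a ∈ cluster R x)
    (hb : b ∈ cluster R x) (hab : a ≠ b) : R a b := by
  rcases ha with rfl | ⟨hxa, hax⟩ <;> rcases hb with hb | ⟨hxb, hbx⟩
  · exact absurd hb.symm hab
  · exact hxb
  · rw [Set.mem_singleton_iff.1 hb]; exact hax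
  · exact (hw a x b hax hxb).resolve_left hab

def glueRel (a b : W) (u v : W) : Prop :=
  u = v ∨ (u = a ∧ v = b) ∨ (u = b ∧ v = a)

theorem glueRel_comm {a b u v : W} : glueRel a b u v ↔ glueRel b a u v := by
  unfold glueRel; tauto

theorem glueRel_symm {a b u v : W} (h : glueRel a b u v) : glueRel a b v u := by
  unfold glueRel at *; aesop

theorem exists_rel_glueRel_of_rel (hw : WTrans R) {a b y : W} (hba : R b a) (hay : R a y) :
    ∃ z, R b z ∧ glueRel a b y z := by
  rcases hw b a y hba hay with rfl | hby
  · exact ⟨a, hba, Or.inr (Or.inr ⟨rfl, rfl⟩)⟩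
  · exact ⟨y, hby, Or.inl rfl⟩

theorem exists_rel_glueRel (hw : WTrans R) {a b u v y : W} (hab : R a b) (hba : R b a)
    (huv : glueRel a b u v) (huy : R u y) : ∃ z, R v z ∧ glueRel a b y z := by
  rcases huv with rfl | ⟨rfl, rfl⟩ | ⟨rfl, rfl⟩
  · exact ⟨y, huy, Or.inl rfl⟩
  · exact exists_rel_glueRel_of_rel hw hba huy
  · obtain ⟨z, hvz, hyz⟩ := exists_rel_glueRel_of_rel hw hab huy
    exact ⟨z, hvz, glueRel_comm.2 hyz⟩

theorem isBisim_glueRel {ρ : Finset ℕ} {M : KModel W} (hw : WTrans M.R) {a b : W}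
    (hab : M.R a b) (hba : M.R b a) (hval : ∀ n ∈ ρ, M.val n a ↔ M.val n b) :
    IsBisim ρ M M (glueRel a b) := by
  intro u v huv
  refine ⟨?_, fun y huy => exists_rel_glueRel hw hab hba huv huy, fun z hvz => ?_⟩
  · intro n hn
    rcases huv with rfl | ⟨rfl, rfl⟩ | ⟨rfl, rfl⟩
    · exact Iff.rfl
    · exact hval n hn
    · exact (hval n hn).symm
  · obtain ⟨y, huy, hzy⟩ := exists_rel_glueRel hw hab hba (glueRel_symm huv) hvz
    exact ⟨y, huy, glueRel_symm hzy⟩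

theorem eq_of_mem_cluster_of_val_iff {σ : Finset ℕ} {M : KModel W} (hw : WTrans M.R)
    (hd : Descriptive σ M) {x a b : W} (ha : a ∈ cluster M.R x) (hb : b ∈ cluster M.R x)
    (hval : ∀ n ∈ σ, M.val n a ↔ M.val n b) : a = b := by
  by_contra hne
  have hbisim := isBisim_glueRel hw (rel_of_mem_cluster hw ha hb hne)
    (rel_of_mem_cluster hw hb ha (Ne.symm hne)) hval
  exact hne (hd.1 a b fun φ hφ => sat_iff_of_isBisim hbisim φ hφ (Or.inr (Or.inl ⟨rfl, rfl⟩)))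

end Cluster

/-- In any descriptive σ-model based on a weakly transitive frame, every
cluster has at most 2^{|σ|} points. -/
theorem stmt9 {W : Type} (σ : Finset ℕ) (M : KModel W)
    (hw : WTrans M.R) (hd : Descriptive σ M) (x : W) :
    (cluster M.R x).Finite ∧ (cluster M.R x).ncard ≤ 2 ^ σ.card := by
  classical
  let trueVars : W → Finset ℕ := fun w => {n ∈ σ | M.val n w}
  have hmaps : Set.MapsTo trueVars (cluster M.R x) σ.powerset := fun w _ =>
    Finset.mem_coe.2 (Finset.mem_powerset.2 (Finset.filter_subset _ σ))
  have hinj : Set.InjOn trueVars (cluster M.R x) := by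
    intro a ha b hb hab
    refine eq_of_mem_cluster_of_val_iff hw hd ha hb fun n hn => ?_
    simpa [trueVars, hn] using Finset.ext_iff.1 hab n
  refine ⟨Set.Finite.of_injOn hmaps hinj σ.powerset.finite_toSet, ?_⟩
  calc (cluster M.R x).ncard ≤ (σ.powerset : Set (Finset ℕ)).ncard :=
        Set.ncard_le_ncard_of_injOn trueVars hmaps hinj σ.powerset.finite_toSet
    _ = 2 ^ σ.card := by rw [Set.ncard_coe_finset, Finset.card_powerset]
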